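/- arXiv:1509.04251 — 2 statements merged into one kernel-verified Lean document; each statement's English description precedes it below -/
import Mathlib

section
/- Let K be a field, let A be a unital K-algebra, and let a, d ∈ A be such that a is invertible along d. Then for every scalar t ∈ K with t ≠ 0, the element d·a + t·(d·a)^π is invertible in A and a^{∥d} = (d·a + t·(d·a)^π)⁻¹·d. -/
/-- `b` is the inverse of `a` along `d`: `b*a*b = b`, `bA = dA` and `Ab = Ad`. -/
def IsInverseAlong {A : Type*} [Ring A] (b a d : A) : Prop :=
  b * a * b = b ∧ {x : A | ∃ r, x = b * r} = {x : A | ∃ r, x = d * r} ∧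
    {x : A | ∃ r, x = r * b} = {x : A | ∃ r, x = r * d}

/-- `x` is the group inverse of `a`. -/
def IsGroupInverse {A : Type*} [Ring A] (x a : A) : Prop :=
  a * x * a = a ∧ x * a * x = x ∧ a * x = x * a

/-- Group inverses are unique. -/
theorem isGroupInverse_unique {A : Type*} [Ring A] {x g g' : A}
    (h : IsGroupInverse g x) (h' : IsGroupInverse g' x) : g = g' := by
  obtain ⟨h1, h2, h3⟩ := h
  obtain ⟨h1', h2', h3'⟩ := h'
  have key : x * g = x * g' := by
    have a1 : x * g' = (x * g) * (x * g') := by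
      calc x * g' = (x * g * x) * g' := by rw [h1]
        _ = (x * g) * (x * g') := by noncomm_ring
    have a3 : x * g = (x * g) * (x * g') := by
      calc x * g = g * x := h3
        _ = g * (x * g' * x) := by rw [h1']
        _ = (g * x) * (g' * x) := by noncomm_ring
        _ = (x * g) * (x * g') := by rw [← h3, ← h3']
    rw [a3, ← a1]
  calc g = g * (x * g) := by rw [← mul_assoc, h2]
    _ = g * (x * g') := by rw [key]
    _ = (g * x) * g' := by noncomm_ring
    _ = (x * g') * g' := by rw [← h3, key]
    _ = (g' * x) * g' := by rw [h3']
    _ = g' := h2'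

theorem stmt_11 {K A : Type*} [Field K] [Ring A] [Algebra K A] (a d b : A)
    (h : IsInverseAlong b a d) (t : K) (ht : t ≠ 0) :
    (∃ g, IsGroupInverse g (d * a)) ∧
      ∀ g, IsGroupInverse g (d * a) →
        IsUnit (d * a + t • (1 - d * a * g)) ∧
          b = Ring.inverse (d * a + t • (1 - d * a * g)) * d := by
  obtain ⟨hb, hR, hL⟩ := h
  obtain ⟨r, hr⟩ : ∃ r, b = d * r := by
    have h1 : b ∈ {x : A | ∃ r, x = b * r} := ⟨1, (mul_one b).symm⟩
    rw [hR] at h1; exact h1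
  obtain ⟨u, hu⟩ : ∃ u, d = b * u := by
    have h1 : d ∈ {x : A | ∃ r, x = d * r} := ⟨1, (mul_one d).symm⟩
    rw [← hR] at h1; exact h1
  obtain ⟨s, hs⟩ : ∃ s, b = s * d := by
    have h1 : b ∈ {x : A | ∃ r, x = r * b} := ⟨1, (one_mul b).symm⟩
    rw [hL] at h1; exact h1
  obtain ⟨w, hw⟩ : ∃ w, d = w * b := by
    have h1 : d ∈ {x : A | ∃ r, x = r * d} := ⟨1, (one_mul d).symm⟩
    rw [← hL] at h1; exact h1
  -- key identities
  have hdab : d * a * b = d := by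
    calc d * a * b = w * (b * a * b) := by rw [hw]; noncomm_ring
      _ = w * b := by rw [hb]
      _ = d := hw.symm
  have hbad : b * a * d = d := by
    calc b * a * d = (b * a * b) * u := by rw [hu]; noncomm_ring
      _ = b * u := by rw [hb]
      _ = d := hu.symm
  have hdasd : d * a * s * d = d := by
    calc d * a * s * d = d * a * (s * d) := by noncomm_ring
      _ = d * a * b := by rw [← hs]
      _ = d := hdab
  have hdasb : d * a * s * b = b := by
    calc d * a * s * b = (d * a * s * d) * r := by rw [hr]; noncomm_ring
      _ = d * r := by rw [hdasd]
      _ = b := hr.symm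
  -- the candidate group inverse
  have hA : d * a * (b * a * s * b * a) = b * a := by
    have e : d * a * (b * a * s * b * a) = d * a * b * a * s * b * a := by noncomm_ring
    rw [e, hdab, hdasb]
  have hB : b * a * s * b * a * (d * a) = b * a := by
    have e : b * a * s * b * a * (d * a) = b * a * s * (b * a * d) * a := by noncomm_ring
    rw [e, hbad, show b * a * s * d * a = b * a * (s * d) * a from by noncomm_ring,
      ← hs, hb]
  have hg0d : b * a * s * b * a * d = b := by
    rw [show b * a * s * b * a * d = b * a * s * (b * a * d) from by noncomm_ring, hbad,
      show b * a * s * d = b * a * (s * d) from by noncomm_ring, ← hs, hb]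
  have hbag0 : b * a * (b * a * s * b * a) = b * a * s * b * a := by
    rw [show b * a * (b * a * s * b * a) = (b * a * b) * a * s * b * a from by noncomm_ring, hb]
  have hg0ba : b * a * s * b * a * (b * a) = b * a * s * b * a := by
    rw [show b * a * s * b * a * (b * a) = b * a * s * (b * a * b) * a from by noncomm_ring, hb]
  have hdaba : d * a * (b * a) = d * a := by
    rw [show d * a * (b * a) = (d * a * b) * a from by noncomm_ring, hdab]
  have hbada : b * a * (d * a) = d * a := by
    rw [show b * a * (d * a) = (b * a * d) * a from by noncomm_ring, hbad]
  have hbaba : b * a * (b * a) = b * a := by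
    rw [show b * a * (b * a) = (b * a * b) * a from by noncomm_ring, hb]
  have hgi0 : IsGroupInverse (b * a * s * b * a) (d * a) := by
    refine ⟨?_, ?_, ?_⟩
    · rw [hA, hbada]
    · rw [hB, hbag0]
    · rw [hA, hB]
  refine ⟨⟨b * a * s * b * a, hgi0⟩, fun g hg => ?_⟩
  have hge : g = b * a * s * b * a := isGroupInverse_unique hg hgi0
  subst hge
  rw [hA]
  -- auxiliary zero identities
  have hq1 : d * a * (1 - b * a) = 0 := by rw [mul_sub, mul_one, hdaba, sub_self]
  have hq2 : (1 - b * a) * (b * a * s * b * a) = 0 := by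
    rw [sub_mul, one_mul, hbag0, sub_self]
  have hq3 : (b * a * s * b * a) * (1 - b * a) = 0 := by
    rw [mul_sub, mul_one, hg0ba, sub_self]
  have hq4 : (1 - b * a) * (d * a) = 0 := by rw [sub_mul, one_mul, hbada, sub_self]
  have hq5 : (1 - b * a) * (1 - b * a) = 1 - b * a := by
    rw [show (1 - b * a) * (1 - b * a) = 1 - b * a - (b * a - b * a * (b * a)) from by
      noncomm_ring, hbaba, sub_self, sub_zero]
  have hqd : (1 - b * a) * d = 0 := by rw [sub_mul, one_mul, hbad, sub_self]
  have htt : t * t⁻¹ = 1 := mul_inv_cancel₀ ht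
  have htt' : t⁻¹ * t = 1 := inv_mul_cancel₀ ht
  set uu : A := d * a + t • (1 - b * a) with huu
  set vv : A := b * a * s * b * a + t⁻¹ • (1 - b * a) with hvv
  have huv : uu * vv = 1 := by
    rw [huu, hvv]
    simp only [mul_add, add_mul, smul_mul_assoc, mul_smul_comm, smul_smul, hA, hq1, hq2,
      hq5, smul_zero, add_zero, zero_add, htt, htt', one_smul]
    abel
  have hvu : vv * uu = 1 := by
    rw [huu, hvv]
    simp only [mul_add, add_mul, smul_mul_assoc, mul_smul_comm, smul_smul, hB, hq3, hq4,
      hq5, smul_zero, add_zero, zero_add, htt, htt', one_smul]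
    abel
  have hU : IsUnit uu := ⟨⟨uu, vv, huv, hvu⟩, rfl⟩
  refine ⟨hU, ?_⟩
  have hinv : Ring.inverse uu = vv := Ring.inverse_unit ⟨uu, vv, huv, hvu⟩
  rw [hinv, hvv, add_mul, smul_mul_assoc, hqd, smul_zero, add_zero, hg0d]
end

section
/- Let A be a unital C*-algebra and let a, d ∈ A be such that a is invertible along d. Let d⁻ ∈ A be an inner inverse of d such that d·d⁻ is self-adjoint. Then for all sufficiently small real t > 0 (in particular with t·‖a^{∥d}‖·‖d⁻‖ < 1 and d·a + t·1 invertible), one has ‖(d·a + t·1)⁻¹·d − a^{∥d}‖ ≤ (t·‖a^{∥d}‖²·‖d⁻‖² / (1 − t·‖a^{∥d}‖·‖d⁻‖))·‖d‖. -/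
theorem stmt_13 {A : Type*} [NormedRing A] [StarRing A] [CStarRing A]
    [NormedAlgebra ℂ A] [CompleteSpace A] (a d b : A)
    (h : IsInverseAlong b a d) (di : A) (hdi : d * di * d = d)
    (hsa : star (d * di) = d * di) :
    ∃ δ > (0 : ℝ), ∀ t : ℝ, 0 < t → t < δ →
      t * ‖b‖ * ‖di‖ < 1 ∧ IsUnit (d * a + (t : ℂ) • (1 : A)) ∧
        ‖Ring.inverse (d * a + (t : ℂ) • (1 : A)) * d - b‖ ≤
          t * ‖b‖ ^ 2 * ‖di‖ ^ 2 / (1 - t * ‖b‖ * ‖di‖) * ‖d‖ := by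
  obtain ⟨hbab, hR, hL⟩ := h
  obtain ⟨u0, hu0⟩ : b ∈ {x : A | ∃ r, x = d * r} := by
    rw [← hR]; exact ⟨1, (mul_one b).symm⟩
  obtain ⟨c1, hc1⟩ : d ∈ {x : A | ∃ r, x = b * r} := by
    rw [hR]; exact ⟨1, (mul_one d).symm⟩
  obtain ⟨v0, hv0⟩ : b ∈ {x : A | ∃ r, x = r * d} := by
    rw [← hL]; exact ⟨1, (one_mul b).symm⟩
  obtain ⟨c2, hc2⟩ : d ∈ {x : A | ∃ r, x = r * b} := by
    rw [hL]; exact ⟨1, (one_mul d).symm⟩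
  have hbad : b * a * d = d := by rw [hc1, ← mul_assoc, hbab]
  have hdab : d * a * b = d := by
    rw [hc2, mul_assoc, mul_assoc, ← mul_assoc b a b, hbab]
  have heb : d * di * b = b := by rw [hu0, ← mul_assoc, hdi]
  have hbe : b * di * d = b := by
    rw [hv0, mul_assoc, mul_assoc, ← mul_assoc d di d, hdi]
  -- atom identities
  have hee : d * di * (d * di) = d * di := by rw [← mul_assoc, hdi]
  have hew : d * di * (b * di) = b * di := by rw [← mul_assoc, heb]
  have hwe : b * di * (d * di) = b * di := by rw [← mul_assoc, hbe]
  have hqw : d * a * (b * di) = d * di := by rw [← mul_assoc, hdab]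
  have heq : d * di * (d * a) = d * a := by rw [← mul_assoc, hdi]
  have hwq : b * di * (d * a) = b * a := by rw [← mul_assoc, hbe]
  have hbae : b * a * (d * di) = d * di := by rw [← mul_assoc, hbad]
  have hnb : ‖b‖ ≤ ‖b * di‖ * ‖d‖ := by
    calc ‖b‖ = ‖b * di * d‖ := by rw [hbe]
      _ ≤ ‖b * di‖ * ‖d‖ := norm_mul_le _ _
  set q := d * a with hdefq
  set e := d * di with hdefe
  set w := b * di with hdefw
  clear_value q e w
  have hnw : ‖w‖ ≤ ‖b‖ * ‖di‖ := hdefw ▸ norm_mul_le b di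
  refine ⟨(‖b‖ * ‖di‖ + 1)⁻¹, by positivity, fun t ht htd => ?_⟩
  have hx0 : (0:ℝ) ≤ ‖b‖ * ‖di‖ := by positivity
  have hp : (0:ℝ) < ‖b‖ * ‖di‖ + 1 := by positivity
  have h2 : t * (‖b‖ * ‖di‖ + 1) < 1 := by
    rw [inv_eq_one_div] at htd
    exact (lt_div_iff₀ hp).mp htd
  have h1 : t * ‖b‖ * ‖di‖ < 1 := by nlinarith
  have hc0 : (t:ℂ) ≠ 0 := Complex.ofReal_ne_zero.mpr ht.ne'
  have hnorm : ‖-((t:ℂ) • w)‖ < 1 := by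
    rw [norm_neg, norm_smul, Complex.norm_real, Real.norm_eq_abs, abs_of_pos ht]
    calc t * ‖w‖ ≤ t * (‖b‖ * ‖di‖) := by nlinarith
      _ < 1 := by nlinarith
  set s : A := ↑(Units.oneSub (-((t:ℂ) • w)) hnorm)⁻¹ with hdefs
  clear_value s
  have hs1 : (1 + (t:ℂ) • w) * s = 1 := by
    have h3 := (Units.oneSub (-((t:ℂ) • w)) hnorm).mul_inv
    rwa [Units.val_oneSub, sub_neg_eq_add, ← hdefs] at h3
  have hs2 : s * (1 + (t:ℂ) • w) = 1 := by
    have h3 := (Units.oneSub (-((t:ℂ) • w)) hnorm).inv_mul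
    rwa [Units.val_oneSub, sub_neg_eq_add, ← hdefs] at h3
  have hsw1 : s = 1 - (t:ℂ) • (w * s) := by
    have h3 := hs1
    rw [add_mul, one_mul, smul_mul_assoc] at h3
    exact (eq_sub_of_add_eq h3)
  have hsw2 : s = 1 - (t:ℂ) • (s * w) := by
    have h3 := hs2
    rw [mul_add, mul_one, mul_smul_comm] at h3
    exact (eq_sub_of_add_eq h3)
  have hcomm : w * s = s * w := by
    refine smul_right_injective A hc0 ?_
    exact sub_right_inj.mp (hsw1.symm.trans hsw2)
  have hes : e * s = e - (t:ℂ) • (w * s) := by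
    conv_lhs => rw [hsw1]
    rw [mul_sub, mul_one, mul_smul_comm, ← mul_assoc, hew]
  have hse : s * e = e - (t:ℂ) • (w * s) := by
    conv_lhs => rw [hsw2]
    rw [sub_mul, one_mul, smul_mul_assoc, mul_assoc, hwe, ← hcomm]
  set m : A := w * s + (t:ℂ)⁻¹ • (1 - e) with hdefm
  set M : A := q * e + (t:ℂ) • 1 with hdefM
  set N : A := q - q * e with hdefN
  set Y : A := m - m * (N * m) with hdefY
  clear_value m M N Y
  have T1 : (q * e) * (w * s) = e * s := by
    rw [← mul_assoc, mul_assoc q e w, hew, hqw]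
  have hMm : M * m = 1 := by
    rw [hdefM, hdefm, add_mul, mul_add, mul_add]
    have T2 : (q * e) * ((t:ℂ)⁻¹ • (1 - e)) = 0 := by
      rw [mul_smul_comm, mul_sub, mul_one, mul_assoc, hee, sub_self, smul_zero]
    have T3 : ((t:ℂ) • (1:A)) * (w * s) = (t:ℂ) • (w * s) := by
      rw [smul_mul_assoc, one_mul]
    have T4 : ((t:ℂ) • (1:A)) * ((t:ℂ)⁻¹ • (1 - e)) = 1 - e := by
      rw [smul_mul_assoc, one_mul, smul_smul, mul_inv_cancel₀ hc0, one_smul]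
    rw [T1, T2, T3, T4, hes]
    abel
  have hmM : m * M = 1 := by
    rw [hdefm, hdefM, add_mul, mul_add, mul_add]
    have U1 : (w * s) * (q * e) = s * e := by
      rw [hcomm, mul_assoc, ← mul_assoc w q e, hwq, hbae]
    have U2 : (w * s) * ((t:ℂ) • (1:A)) = (t:ℂ) • (w * s) := by
      rw [mul_smul_comm, mul_one]
    have U3 : ((t:ℂ)⁻¹ • (1 - e)) * (q * e) = 0 := by
      rw [smul_mul_assoc, sub_mul, one_mul, ← mul_assoc, heq, sub_self, smul_zero]
    have U4 : ((t:ℂ)⁻¹ • (1 - e)) * ((t:ℂ) • (1:A)) = 1 - e := by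
      rw [smul_mul_assoc, mul_smul_comm, mul_one, smul_smul, inv_mul_cancel₀ hc0, one_smul]
    rw [U1, U2, U3, U4, hse]
    abel
  have hNm : N * m = (t:ℂ)⁻¹ • N := by
    rw [hdefN, hdefm, mul_add]
    have V1 : (q - q * e) * (w * s) = 0 := by
      rw [sub_mul, ← mul_assoc q w s, hqw, T1, sub_self]
    have V2 : (q - q * e) * ((t:ℂ)⁻¹ • (1 - e)) = (t:ℂ)⁻¹ • (q - q * e) := by
      rw [mul_smul_comm]
      congr 1
      have expand : (q - q * e) * (1 - e) = q - q * e - q * e + q * (e * e) := by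
        noncomm_ring
      rw [expand, hee]
      abel
    rw [V1, V2, zero_add]
  have hNN : N * N = 0 := by
    rw [hdefN]
    have expand : (q - q * e) * (q - q * e)
        = q * q - q * (q * e) - q * (e * q) + q * (e * q * e) := by
      noncomm_ring
    rw [expand, heq]
    abel
  have hNmN : (N * m) * N = 0 := by
    rw [hNm, smul_mul_assoc, hNN, smul_zero]
  have hqc : q + (t:ℂ) • (1:A) = M + N := by
    rw [hdefM, hdefN]; abel
  have huY : (q + (t:ℂ) • (1:A)) * Y = 1 := by
    rw [hqc, hdefY, add_mul, mul_sub, mul_sub, ← mul_assoc M m (N * m), hMm, one_mul,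
      ← mul_assoc N m (N * m), ← mul_assoc (N * m) N m, hNmN, zero_mul]
    abel
  have hNM : N * M = (t:ℂ) • N := by
    rw [hdefN, hdefM]
    have expand : (q - q * e) * (q * e + (t:ℂ) • (1:A))
        = q * (q * e) - q * (e * q * e) + (t:ℂ) • (q - q * e) := by
      noncomm_ring
    rw [expand, heq]
    abel
  have hYu : Y * (q + (t:ℂ) • (1:A)) = 1 := by
    rw [hqc, hdefY, sub_mul, mul_add, mul_add]
    have hY2 : m * (N * m) = (t:ℂ)⁻¹ • (m * N) := by
      rw [hNm, mul_smul_comm]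
    have hYM : (m * N) * M = (t:ℂ) • (m * N) := by
      rw [mul_assoc, hNM, mul_smul_comm]
    have hYN : (m * N) * N = 0 := by
      rw [mul_assoc, hNN, mul_zero]
    rw [hY2, smul_mul_assoc, smul_mul_assoc, hYM, hYN, smul_zero, smul_smul,
      inv_mul_cancel₀ hc0, one_smul, hmM]
    abel
  have hU : IsUnit (q + (t:ℂ) • (1:A)) := ⟨⟨q + (t:ℂ) • (1:A), Y, huY, hYu⟩, rfl⟩
  have hinv : Ring.inverse (q + (t:ℂ) • (1:A)) = Y :=
    Ring.inverse_unit ⟨q + (t:ℂ) • (1:A), Y, huY, hYu⟩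
  have hub : (q + (t:ℂ) • (1:A)) * b = d + (t:ℂ) • b := by
    rw [add_mul, hdab, smul_mul_assoc, one_mul]
  have hYd : Y * d = b - (t:ℂ) • (Y * b) := by
    have h3 : Y * ((q + (t:ℂ) • (1:A)) * b) = b := by
      rw [← mul_assoc, hYu, one_mul]
    rw [hub, mul_add, mul_smul_comm] at h3
    exact eq_sub_of_add_eq h3
  have hmb : m * b = (w * s) * b := by
    rw [hdefm, add_mul, smul_mul_assoc, sub_mul, one_mul, heb, sub_self, smul_zero,
      add_zero]
  have hNb : N * b = 0 := by
    rw [hdefN, sub_mul, mul_assoc, heb, sub_self]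
  have hYb : Y * b = (w * s) * b := by
    rw [hdefY, sub_mul, hmb, hNm, mul_smul_comm, smul_mul_assoc, mul_assoc m N b, hNb,
      mul_zero, smul_zero, sub_zero]
  refine ⟨h1, hU, ?_⟩
  rw [hinv, hYd]
  have h4 : b - (t:ℂ) • (Y * b) - b = -((t:ℂ) • (Y * b)) := by abel
  rw [h4, hYb, norm_neg, norm_smul, Complex.norm_real, Real.norm_eq_abs, abs_of_pos ht]
  clear! Y M N m
  clear hdefs hs1 hs2 hsw2 hcomm hes hse hbab hR hL hu0 hc1 hv0 hc2 hbad hdab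
    heb hbe hee hew hwe hqw heq hwq hbae hdefq hdefe hdefw h2 htd hp hc0 hnorm hU
  -- norm estimates
  have hK : (0:ℝ) < 1 - t * ‖b‖ * ‖di‖ := by linarith
  have hone : ‖(1:A)‖ ≤ 1 := by
    have h6 := CStarRing.norm_star_mul_self (x := (1:A))
    simp only [star_one, one_mul] at h6
    nlinarith [norm_nonneg (1:A)]
  have hsb : ‖s‖ * (1 - t * ‖b‖ * ‖di‖) ≤ 1 := by
    have h5 : ‖s‖ ≤ 1 + t * (‖w‖ * ‖s‖) := by
      calc ‖s‖ = ‖1 - (t:ℂ) • (w * s)‖ := by rw [← hsw1]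
        _ ≤ ‖(1:A)‖ + ‖(t:ℂ) • (w * s)‖ := norm_sub_le _ _
        _ ≤ 1 + t * (‖w‖ * ‖s‖) := by
            have e2 : ‖(t:ℂ) • (w * s)‖ = t * ‖w * s‖ := by
              rw [norm_smul, Complex.norm_real, Real.norm_eq_abs, abs_of_pos ht]
            have e3 : ‖w * s‖ ≤ ‖w‖ * ‖s‖ := norm_mul_le _ _
            nlinarith [ht.le]
    have k1 : ‖w‖ * ‖s‖ ≤ ‖b‖ * ‖di‖ * ‖s‖ :=
      mul_le_mul_of_nonneg_right hnw (norm_nonneg s)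
    have k2 : t * (‖w‖ * ‖s‖) ≤ t * (‖b‖ * ‖di‖ * ‖s‖) :=
      mul_le_mul_of_nonneg_left k1 ht.le
    ring_nf at h5 k2 ⊢
    linarith [h5, k2]
  have hbd2 : ‖b‖ ≤ ‖b‖ * ‖di‖ * ‖d‖ := by nlinarith [hnb, hnw, norm_nonneg d]
  rw [div_mul_eq_mul_div, le_div_iff₀ hK]
  have h7 : ‖(w * s) * b‖ ≤ ‖w‖ * ‖s‖ * ‖b‖ := by
    calc ‖(w * s) * b‖ ≤ ‖w * s‖ * ‖b‖ := norm_mul_le _ _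
      _ ≤ ‖w‖ * ‖s‖ * ‖b‖ := by nlinarith [norm_mul_le w s, norm_nonneg b]
  calc t * ‖(w * s) * b‖ * (1 - t * ‖b‖ * ‖di‖)
      ≤ t * (‖w‖ * ‖s‖ * ‖b‖) * (1 - t * ‖b‖ * ‖di‖) :=
        mul_le_mul_of_nonneg_right (mul_le_mul_of_nonneg_left h7 ht.le) hK.le
    _ = (t * ‖w‖ * ‖b‖) * (‖s‖ * (1 - t * ‖b‖ * ‖di‖)) := by ring
    _ ≤ (t * ‖w‖ * ‖b‖) * 1 := by
        refine mul_le_mul_of_nonneg_left hsb (by positivity)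
    _ = t * ‖w‖ * ‖b‖ := mul_one _
    _ ≤ t * (‖b‖ * ‖di‖) * (‖b‖ * ‖di‖ * ‖d‖) := by
        have h8 : ‖w‖ * ‖b‖ ≤ (‖b‖ * ‖di‖) * (‖b‖ * ‖di‖ * ‖d‖) :=
          mul_le_mul hnw hbd2 (norm_nonneg b) hx0
        nlinarith [ht.le]
    _ = t * ‖b‖ ^ 2 * ‖di‖ ^ 2 * ‖d‖ := by ring
end
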